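/- Let k ≥ 2, let c₂, …, c_{k−1} ∈ ℂ, and let N(v) = N₀ + vW + Σ_{j=2}^{k−1} c_j v^j W + v^k M(v), where M is an analytic function from an open disc D centred at 0 into the bounded operators on ℋ (so N is a resonant path tangent to the direction W at N₀ to order at least k). Let χ : D → ℋ be analytic with χ(v) ≠ 0 and N(v) χ(v) = z₀ χ(v) for all v ∈ D. Then: (1) for l = 1, …, k the vector χ^(l−1)(0) is a resonance vector of order exactly l, i.e. (1 − v R(v) W)^l χ^(l−1)(0) = 0 and (1 − v R(v) W)^(l−1) χ^(l−1)(0) ≠ 0 for every v with 0 < |v| ≤ r; (2) for l = 1, …, k, A χ^(l−1)(0) = (l−1) χ^(l−2)(0) + Σ_{j=2}^{l−1} j!·binom(l−1, j)·c_j·χ^(l−1−j)(0); (3) χ(0) has depth at least k−1: χ(0) ∈ range(A^(k−1)). -/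

import Mathlib

/-!
Write `L = N₀ - z₀`, `T(v) = 1 - v R(v) W` and `aₘ = χ⁽ᵐ⁾(0)`. Differentiating `N(v) χ(v) = z₀ χ(v)`
`m < k` times at `0` gives `L aₘ + W Bₘ = 0`, where `Bₘ = m aₘ₋₁ + (lower aⱼ)` is the right-hand
side of (2). Since `R(v) L = T(v)`, this reads `v T(v) aₘ = T(v) Bₘ - Bₘ`. Induction on `m` gives
`T(v)^(m+1) aₘ = 0` and `vᵐ T(v)ᵐ aₘ = (-1)ᵐ m! a₀ ≠ 0`, and shows that `v ↦ T(v) aₘ` is a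
polynomial in `v⁻¹` without constant term and with `v⁻¹`-coefficient `-Bₘ`; as
`A = -(2πi)⁻¹ ∮ T(v) dv`, this gives `A aₘ = Bₘ`. So `A` is triangular on `a₀, …, aₖ₋₁` with
nonzero subdiagonal, whence `a₀ ∈ range A^(k-1)`.
-/

open Complex MeasureTheory ContinuousLinearMap
open scoped InnerProductSpace

/-- The nilpotent operator `A = K₋₁ ∘ W`, where
`K₋₁ = (2πi)⁻¹ ∮_{|v|=r} v • R(v) dv`. -/
noncomputable def resA {H : Type*} [NormedAddCommGroup H] [NormedSpace ℂ H]
    (R : ℂ → (H →L[ℂ] H)) (W : H →L[ℂ] H) (r : ℝ) : H →L[ℂ] H :=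
  ((2 * (Real.pi : ℂ) * Complex.I)⁻¹ • ∮ v in C(0, r), v • R v) * W

open Filter Topology Metric

section Chains

open Submodule Set

variable {K V : Type*} [Field K] [AddCommGroup V] [Module K V] {T : Module.End K V}
  {a B : ℕ → V} {m n : ℕ}

theorem span_image_Iio_le_ker_pow (h : ∀ j < m, (T ^ (j + 1)) (a j) = 0) :
    span K (a '' Iio m) ≤ LinearMap.ker (T ^ m) := by
  rw [span_le]
  rintro _ ⟨j, hj, rfl⟩
  exact Module.End.pow_map_zero_of_le (Nat.succ_le_of_lt hj) (h j hj)

theorem mem_span_image_Iio_of_sub_mem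
    (hB : B m - (m : K) • a (m - 1) ∈ span K (a '' Iio (m - 1))) : B m ∈ span K (a '' Iio m) := by
  have hmono : span K (a '' Iio (m - 1)) ≤ span K (a '' Iio m) :=
    span_mono (image_mono (Iio_subset_Iio (Nat.sub_le m 1)))
  rcases Nat.eq_zero_or_pos m with rfl | hm
  · simpa using hB
  · have ha : a (m - 1) ∈ span K (a '' Iio m) := subset_span ⟨m - 1, Set.mem_Iio.mpr (by omega), rfl⟩
    simpa using add_mem (hmono hB) (smul_mem _ (m : K) ha)

variable {v : K}

theorem smul_pow_apply_eq_pow_apply_sub (hrel : v • T (a m) = T (B m) - B m) (p : ℕ) :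
    v • (T ^ (p + 1)) (a m) = (T ^ (p + 1)) (B m) - (T ^ p) (B m) := by
  rw [pow_succ, Module.End.mul_apply, ← map_smul, hrel, map_sub, ← Module.End.mul_apply]

theorem pow_succ_apply_eq_zero (hv : v ≠ 0) (hrel : ∀ m ≤ n, v • T (a m) = T (B m) - B m)
    (hB : ∀ m ≤ n, B m ∈ span K (a '' Iio m)) : ∀ m ≤ n, (T ^ (m + 1)) (a m) = 0 := by
  intro m
  induction m using Nat.strong_induction_on with
  | _ m ih =>
    intro hm
    have hker : B m ∈ LinearMap.ker (T ^ m) :=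
      span_image_Iio_le_ker_pow (fun j hj => ih j hj (by omega)) (hB m hm)
    have hker' : (T ^ (m + 1)) (B m) = 0 :=
      Module.End.pow_map_zero_of_le m.le_succ hker
    have := smul_pow_apply_eq_pow_apply_sub (hrel m hm) m
    rw [hker', LinearMap.mem_ker.mp hker, sub_zero, smul_eq_zero] at this
    exact this.resolve_left hv

theorem smul_pow_apply_eq_factorial_smul (hv : v ≠ 0)
    (hrel : ∀ m ≤ n, v • T (a m) = T (B m) - B m)
    (hB : ∀ m ≤ n, B m - (m : K) • a (m - 1) ∈ span K (a '' Iio (m - 1))) :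
    ∀ m ≤ n, v ^ m • (T ^ m) (a m) = ((-1) ^ m * m.factorial : K) • a 0 := by
  have hnil := pow_succ_apply_eq_zero hv hrel fun m hm => mem_span_image_Iio_of_sub_mem (hB m hm)
  intro m hm
  induction m with
  | zero => simp
  | succ m ih =>
    have hker : B (m + 1) ∈ LinearMap.ker (T ^ (m + 1)) :=
      span_image_Iio_le_ker_pow (fun j hj => hnil j (by omega))
        (mem_span_image_Iio_of_sub_mem (hB (m + 1) hm))
    have hrest : (T ^ m) (B (m + 1) - ((m + 1 : ℕ) : K) • a m) = 0 :=
      span_image_Iio_le_ker_pow (fun j hj => hnil j (by omega)) (hB (m + 1) hm)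
    rw [map_sub, map_smul, sub_eq_zero] at hrest
    calc v ^ (m + 1) • (T ^ (m + 1)) (a (m + 1))
        = v ^ m • (v • (T ^ (m + 1)) (a (m + 1))) := by rw [pow_succ, mul_smul]
      _ = -((m + 1 : ℕ) : K) • (v ^ m • (T ^ m) (a m)) := by
        rw [smul_pow_apply_eq_pow_apply_sub (hrel (m + 1) hm), LinearMap.mem_ker.mp hker,
          hrest, zero_sub, smul_neg, smul_comm, neg_smul]
      _ = ((-1) ^ (m + 1) * (m + 1).factorial : K) • a 0 := by
        rw [ih (by omega), smul_smul, Nat.factorial_succ]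
        push_cast
        ring_nf

theorem span_image_Iio_le_map_span (A : Module.End K V) [CharZero K]
    (hA : ∀ m ≤ n, A (a m) - (m : K) • a (m - 1) ∈ span K (a '' Iio (m - 1))) :
    ∀ m ≤ n, span K (a '' Iio m) ≤ (span K (a '' Iio (m + 1))).map A := by
  have hmono : ∀ m, span K (a '' Iio m) ≤ span K (a '' Iio (m + 1)) := fun m =>
    span_mono (image_mono (Iio_subset_Iio m.le_succ))
  intro m
  induction m with
  | zero => simp
  | succ m ih =>
    intro hm
    have ih' := (ih (by omega)).trans (map_mono (hmono _))
    rw [span_le]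
    rintro _ ⟨j, hj, rfl⟩
    rcases Nat.lt_succ_iff_lt_or_eq.mp hj with hj | rfl
    · exact ih' (subset_span ⟨j, hj, rfl⟩)
    · have hsub := ih' (hA (j + 1) hm)
      have hAa : A (a (j + 1)) ∈ (span K (a '' Iio (j + 1 + 1))).map A :=
        mem_map_of_mem (subset_span ⟨j + 1, by simp, rfl⟩)
      have hne : ((j + 1 : ℕ) : K) ≠ 0 := Nat.cast_ne_zero.mpr j.succ_ne_zero
      have := smul_mem _ ((j + 1 : ℕ) : K)⁻¹ (sub_mem hAa hsub)
      rwa [sub_sub_cancel, Nat.add_sub_cancel, smul_smul, inv_mul_cancel₀ hne, one_smul] at this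

theorem mem_range_pow_of_sub_mem_span (A : Module.End K V) [CharZero K]
    (hA : ∀ m ≤ n, A (a m) - (m : K) • a (m - 1) ∈ span K (a '' Iio (m - 1))) :
    a 0 ∈ range (A ^ n) := by
  have key : ∀ m ≤ n, span K (a '' Iio 1) ≤ (span K (a '' Iio (m + 1))).map (A ^ m) := by
    intro m
    induction m with
    | zero => simp
    | succ m ih =>
      intro hm
      calc span K (a '' Iio 1) ≤ (span K (a '' Iio (m + 1))).map (A ^ m) := ih (by omega)
        _ ≤ ((span K (a '' Iio (m + 1 + 1))).map A).map (A ^ m) :=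
          map_mono (span_image_Iio_le_map_span A hA (m + 1) hm)
        _ = (span K (a '' Iio (m + 1 + 1))).map (A ^ (m + 1)) := by
          rw [← map_comp, pow_succ]; rfl
  obtain ⟨x, -, hx⟩ := key n le_rfl (subset_span ⟨0, by simp, rfl⟩)
  exact ⟨x, hx⟩

end Chains

/-- With `a i = χ⁽ⁱ⁾(0)`, this is the `m`-th derivative at `0` of `(v + ∑ⱼ cⱼ vʲ) • χ(v)`. -/
def tangentTerm {𝕜 E : Type*} [Field 𝕜] [AddCommGroup E] [Module 𝕜 E] (c : ℕ → 𝕜)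
    (a : ℕ → E) (m : ℕ) : E :=
  (m : 𝕜) • a (m - 1) +
    ∑ j ∈ Finset.Icc 2 m, ((j.factorial : 𝕜) * (m.choose j : 𝕜) * c j) • a (m - j)

theorem tangentTerm_sub_mem_span {𝕜 E : Type*} [Field 𝕜] [AddCommGroup E] [Module 𝕜 E]
    (c : ℕ → 𝕜) (a : ℕ → E) (m : ℕ) :
    tangentTerm c a m - (m : 𝕜) • a (m - 1) ∈ Submodule.span 𝕜 (a '' Set.Iio (m - 1)) := by
  rw [tangentTerm, add_sub_cancel_left]
  refine Submodule.sum_mem _ fun j hj => Submodule.smul_mem _ _ (Submodule.subset_span ?_)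
  have := Finset.mem_Icc.mp hj
  exact ⟨m - j, Set.mem_Iio.mpr (by omega), rfl⟩

section IteratedDeriv

open Finset

variable {𝕜 F : Type*} [NontriviallyNormedField 𝕜] [NormedAddCommGroup F] [NormedSpace 𝕜 F]
  {f : 𝕜 → F} {n : ℕ} {x : 𝕜}

theorem ContinuousLinearMap.iteratedDeriv_comp_left {G : Type*} [NormedAddCommGroup G]
    [NormedSpace 𝕜 G] (L : F →L[𝕜] G) (hf : ContDiffAt 𝕜 n f x)
    {i : ℕ} (hi : i ≤ n) : iteratedDeriv i (fun v => L (f v)) x = L (iteratedDeriv i f x) := by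
  simp only [iteratedDeriv_eq_iteratedFDeriv]
  exact congrArg (· fun _ => 1) (L.iteratedFDeriv_comp_left hf (i := i) (by exact_mod_cast hi))

theorem iteratedDeriv_pow_smul_zero (hf : ContDiffAt 𝕜 n f 0) (j : ℕ) :
    iteratedDeriv n (fun v => v ^ j • f v) 0 =
      if j ≤ n then ((n.choose j * j.factorial : ℕ) : 𝕜) • iteratedDeriv (n - j) f 0 else 0 := by
  have h := iteratedDerivWithin_smul (Set.mem_univ 0) uniqueDiffOn_univ
    (f := fun v : 𝕜 => v ^ j) (contDiff_id.pow j).contDiffAt.contDiffWithinAt hf.contDiffWithinAt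
  simp only [iteratedDerivWithin_univ] at h
  rw [show (fun v => v ^ j • f v) = (fun v : 𝕜 => v ^ j) • f from rfl, h]
  simp only [iteratedDeriv_fun_pow_zero]
  split_ifs with hj
  · rw [Finset.sum_eq_single j]
    · simp [mul_smul, Nat.cast_smul_eq_nsmul]
    · intro i _ hij; simp [hij]
    · intro hjn; rw [mem_range] at hjn; omega
  · refine Finset.sum_eq_zero fun i hi => ?_
    have : i ≠ j := by rw [mem_range] at hi; omega
    simp [this]

theorem map_iteratedDeriv_add_map_tangentTerm_eq_zero {L W : F →L[𝕜] F} {M : 𝕜 → F →L[𝕜] F}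
    {χ : 𝕜 → F} {c : ℕ → 𝕜} {k m : ℕ}
    (hm : m < k) (hM : ContDiffAt 𝕜 m M 0) (hχ : ContDiffAt 𝕜 m χ 0)
    (heq : ∀ᶠ v in 𝓝 0,
      (L + v • W + (∑ j ∈ Icc 2 (k - 1), c j * v ^ j) • W + v ^ k • M v) (χ v) = 0) :
    L (iteratedDeriv m χ 0) + W (tangentTerm c (fun i => iteratedDeriv i χ 0) m) = 0 := by
  have hexp : (fun v => (L + v • W + (∑ j ∈ Icc 2 (k - 1), c j * v ^ j) • W + v ^ k • M v) (χ v))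
      = fun v => L (χ v) + v ^ 1 • W (χ v) + ∑ j ∈ Icc 2 (k - 1), c j • (v ^ j • W (χ v))
          + v ^ k • M v (χ v) := by
    funext v
    simp [sum_smul, mul_smul]
  have hzero := Filter.EventuallyEq.iteratedDeriv_eq m (g := fun _ => (0 : F)) heq
  rw [hexp, iteratedDeriv_const, ite_self] at hzero
  have hWχ : ContDiffAt 𝕜 m (fun v => W (χ v)) 0 := W.contDiff.contDiffAt.comp 0 hχ
  have hsum : iteratedDeriv m (fun v => ∑ j ∈ Icc 2 (k - 1), c j • (v ^ j • W (χ v))) 0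
      = ∑ j ∈ Icc 2 m, ((j.factorial : 𝕜) * (m.choose j : 𝕜) * c j) •
          W (iteratedDeriv (m - j) χ 0) := by
    rw [iteratedDeriv_fun_sum fun j _ => by fun_prop,
      ← sum_subset (Icc_subset_Icc_right (by omega : m ≤ k - 1))]
    · refine sum_congr rfl fun j hj => ?_
      rw [iteratedDeriv_fun_const_smul (by fun_prop), iteratedDeriv_pow_smul_zero hWχ,
        if_pos (mem_Icc.mp hj).2, W.iteratedDeriv_comp_left hχ (Nat.sub_le m j), smul_smul]
      push_cast
      ring_nf
    · intro j hj hjm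
      rw [iteratedDeriv_fun_const_smul (by fun_prop), iteratedDeriv_pow_smul_zero hWχ,
        if_neg (by simp_all), smul_zero]
  rw [iteratedDeriv_fun_add (by fun_prop) (by fun_prop), iteratedDeriv_fun_add (by fun_prop)
    (by fun_prop), iteratedDeriv_fun_add (by fun_prop) (by fun_prop), hsum,
    L.iteratedDeriv_comp_left hχ le_rfl, iteratedDeriv_pow_smul_zero hWχ,
    iteratedDeriv_pow_smul_zero (hM.clm_apply hχ), if_neg (show ¬k ≤ m by omega), add_zero]
    at hzero
  rw [← hzero, tangentTerm, map_add, map_sum, W.iteratedDeriv_comp_left hχ (Nat.sub_le m 1)]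
  simp only [map_smul, Nat.choose_one_right, Nat.factorial_one, mul_one]
  split_ifs with hm1
  · rw [add_assoc]
  · simp [show m = 0 by omega]

end IteratedDeriv

theorem ContinuousLinearMap.circleIntegral_comp_comm {E F : Type*} [NormedAddCommGroup E]
    [NormedSpace ℂ E] [CompleteSpace E] [NormedAddCommGroup F] [NormedSpace ℂ F] [CompleteSpace F]
    (L : E →L[ℂ] F) {f : ℂ → E} {c : ℂ} {R : ℝ} (hf : CircleIntegrable f c R) :
    ∮ z in C(c, R), L (f z) = L (∮ z in C(c, R), f z) := by
  simp only [circleIntegral, ← L.map_smul]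
  exact L.intervalIntegral_comp_comm ((circleIntegrable_iff R).mp hf)

theorem circleIntegral_inv_pow {r : ℝ} (hr : r ≠ 0) (i : ℕ) :
    ∮ v in C(0, r), v⁻¹ ^ i = if i = 1 then 2 * Real.pi * I else 0 := by
  split_ifs with hi
  · subst hi
    simpa using circleIntegral.integral_sub_center_inv 0 hr
  · have h := circleIntegral.integral_sub_zpow_of_ne (n := -(i : ℤ)) (by omega) 0 0 r
    simpa [zpow_neg, zpow_natCast, inv_pow] using h

theorem circleIntegrable_inv_pow_smul {E : Type*} [NormedAddCommGroup E] [NormedSpace ℂ E]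
    {g : ℂ → E} {r : ℝ} (hr : 0 < r) (hg : ContinuousOn g (sphere 0 r))
    (i : ℕ) : CircleIntegrable (fun v => v⁻¹ ^ i • g v) 0 r := by
  have hinv : ContinuousOn (fun v : ℂ => v⁻¹) (sphere 0 r) :=
    continuousOn_inv₀.mono fun v hv => ne_zero_of_mem_sphere hr.ne' ⟨v, hv⟩
  exact ContinuousOn.circleIntegrable hr.le ((hinv.pow i).smul hg)

section CircleIntegral

open Submodule Set

variable {E : Type*} [NormedAddCommGroup E] [NormedSpace ℂ E] [CompleteSpace E]
  {T : ℂ → E →L[ℂ] E} {r : ℝ} {a B : ℕ → E} {n : ℕ}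

theorem circleIntegral_inv_pow_smul_apply (hr : 0 < r) (hT : ContinuousOn T (sphere 0 r))
    (hrel : ∀ m ≤ n, ∀ v ∈ sphere (0 : ℂ) r, v • T v (a m) = T v (B m) - B m)
    (hB : ∀ m ≤ n, B m ∈ span ℂ (a '' Iio m)) :
    ∀ m ≤ n, ∀ i,
      (∮ v in C(0, r), v⁻¹ ^ i • T v) (a m) = -(∮ v in C(0, r), v⁻¹ ^ (i + 1)) • B m := by
  have happly : ∀ i x, (∮ v in C(0, r), v⁻¹ ^ i • T v) x = ∮ v in C(0, r), v⁻¹ ^ i • T v x :=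
    fun i x => ((ContinuousLinearMap.apply ℂ E x).circleIntegral_comp_comm
      (circleIntegrable_inv_pow_smul hr hT i)).symm
  intro m
  induction m using Nat.strong_induction_on with
  | _ m ih =>
    intro hm i
    have hker : (∮ v in C(0, r), v⁻¹ ^ (i + 1) • T v) (B m) = 0 := by
      refine (span_le (p := LinearMap.ker (∮ v in C(0, r), v⁻¹ ^ (i + 1) • T v).toLinearMap)).mpr
        ?_ (hB m hm)
      rintro _ ⟨j, hj : j < m, rfl⟩
      rw [SetLike.mem_coe, LinearMap.mem_ker, ContinuousLinearMap.coe_coe, ih j hj (by omega),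
        circleIntegral_inv_pow hr.ne', if_neg (by omega), neg_zero, zero_smul]
    have hcongr : EqOn (fun v => v⁻¹ ^ i • T v (a m))
        (fun v => v⁻¹ ^ (i + 1) • T v (B m) - v⁻¹ ^ (i + 1) • B m) (sphere 0 r) := by
      intro v hv
      have hv0 : v ≠ 0 := ne_zero_of_mem_sphere hr.ne' ⟨v, hv⟩
      simp only
      rw [← smul_sub, ← hrel m hm v hv, pow_succ, mul_smul, smul_smul (v⁻¹), inv_mul_cancel₀ hv0,
        one_smul]
    rw [happly, circleIntegral.integral_congr hr.le hcongr, circleIntegral.integral_sub, ← happly,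
      hker, circleIntegral.integral_smul_const, zero_sub, neg_smul]
    · exact circleIntegrable_inv_pow_smul hr (hT.clm_apply continuousOn_const) (i + 1)
    · exact circleIntegrable_inv_pow_smul hr continuousOn_const (i + 1)

theorem circleIntegral_apply_eq_neg_smul (hr : 0 < r) (hT : ContinuousOn T (sphere 0 r))
    (hrel : ∀ m ≤ n, ∀ v ∈ sphere (0 : ℂ) r, v • T v (a m) = T v (B m) - B m)
    (hB : ∀ m ≤ n, B m ∈ span ℂ (a '' Iio m)) {m : ℕ} (hm : m ≤ n) :
    (∮ v in C(0, r), T v) (a m) = -(2 * Real.pi * I : ℂ) • B m := by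
  have h := circleIntegral_inv_pow_smul_apply hr hT hrel hB m hm 0
  simp only [pow_zero, one_smul, zero_add, circleIntegral_inv_pow hr.ne', if_pos] at h
  exact h

end CircleIntegral

theorem resA_eq_neg_smul_circleIntegral {H : Type*} [NormedAddCommGroup H] [NormedSpace ℂ H]
    [CompleteSpace H] {R : ℂ → H →L[ℂ] H} (W : H →L[ℂ] H) {r : ℝ} (hr : 0 < r)
    (hR : ContinuousOn R (sphere 0 r)) :
    resA R W r = -(2 * (Real.pi : ℂ) * I)⁻¹ • ∮ v in C(0, r), (1 - v • (R v * W)) := by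
  have hint : CircleIntegrable (fun v => v • R v) 0 r :=
    (continuousOn_id.smul hR).circleIntegrable hr.le
  have hint' : CircleIntegrable (fun v => 1 - v • (R v * W)) 0 r :=
    ContinuousOn.circleIntegrable hr.le (by fun_prop)
  have hconst : ∮ _ in C(0, r), (1 : H →L[ℂ] H) = 0 := by
    have h := circleIntegral.integral_smul_const (fun v : ℂ => v⁻¹ ^ 0) (1 : H →L[ℂ] H) 0 r
    rw [circleIntegral_inv_pow hr.ne', if_neg zero_ne_one, zero_smul] at h
    simpa only [pow_zero, one_smul] using h
  have hcomp := ((ContinuousLinearMap.mul ℂ (H →L[ℂ] H)).flip W).circleIntegral_comp_comm hint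
  simp only [flip_apply, mul_apply'] at hcomp
  have hsub : ∀ v : ℂ, v • R v * W = 1 - (1 - v • (R v * W)) := fun v => by
    rw [sub_sub_cancel, smul_mul_assoc]
  simp only [hsub] at hcomp
  rw [circleIntegral.integral_sub (circleIntegrable_const _ _ _) hint', hconst, zero_sub] at hcomp
  rw [resA, smul_mul_assoc, ← hcomp, smul_neg, neg_smul]

theorem ContinuousOn.of_mul_eq_one {X A : Type*} [TopologicalSpace X] [NormedRing A]
    [CompleteSpace A] {f g : X → A} {s : Set X} (hf : ContinuousOn f s)
    (hfg : ∀ x ∈ s, f x * g x = 1 ∧ g x * f x = 1) : ContinuousOn g s := by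
  have hinv : ∀ x ∈ s, g x = Ring.inverse (f x) := fun x hx =>
    (Ring.inverse_unit ⟨f x, g x, (hfg x hx).1, (hfg x hx).2⟩).symm
  intro x hx
  have hcont : ContinuousAt Ring.inverse (f x) :=
    NormedRing.inverse_continuousAt ⟨f x, g x, (hfg x hx).1, (hfg x hx).2⟩
  exact (hcont.comp_continuousWithinAt (hf x hx)).congr hinv (hinv x hx)

theorem smul_apply_eq_apply_sub {𝕜 E : Type*} [NormedField 𝕜] [NormedAddCommGroup E]
    [NormedSpace 𝕜 E] {L W Rv : E →L[𝕜] E} {v : 𝕜} (hR : Rv * (L + v • W) = 1) {x y : E}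
    (h : L x + W y = 0) : v • (1 - v • (Rv * W)) x = (1 - v • (Rv * W)) y - y := by
  have hRL : Rv * L = 1 - v • (Rv * W) := by
    rw [← hR, mul_add, mul_smul_comm, add_sub_cancel_right]
  calc v • (1 - v • (Rv * W)) x = v • Rv (L x) := by rw [← hRL]; rfl
    _ = (1 - v • (Rv * W)) y - y := by
      rw [eq_neg_of_add_eq_zero_left h]
      simp

def IsResolventOn {H : Type*} [NormedAddCommGroup H] [NormedSpace ℂ H] (N₀ W : H →L[ℂ] H)
    (z₀ : ℂ) (r : ℝ) (R : ℂ → H →L[ℂ] H) : Prop :=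
  ∀ v : ℂ, v ≠ 0 → ‖v‖ ≤ r →
    (N₀ + v • W - z₀ • (1 : H →L[ℂ] H)) * R v = 1 ∧ R v * (N₀ + v • W - z₀ • (1 : H →L[ℂ] H)) = 1

section Resolvent

open Submodule Set

variable {H : Type*} [NormedAddCommGroup H] [NormedSpace ℂ H] {N₀ W : H →L[ℂ] H} {z₀ : ℂ}
  {r : ℝ} {R : ℂ → H →L[ℂ] H} {a B : ℕ → H} {n : ℕ}

theorem smul_resolvent_apply_eq (hR : IsResolventOn N₀ W z₀ r R)
    (htaylor : ∀ m ≤ n, (N₀ - z₀ • 1) (a m) + W (B m) = 0) {v : ℂ} (hv : v ≠ 0) (hvr : ‖v‖ ≤ r) :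
    ∀ m ≤ n, v • (1 - v • (R v * W)) (a m) = (1 - v • (R v * W)) (B m) - B m := fun m hm =>
  smul_apply_eq_apply_sub (by rw [sub_add_eq_add_sub]; exact (hR v hv hvr).2) (htaylor m hm)

theorem resolvent_pow_succ_apply_eq_zero_and_pow_apply_ne_zero (hR : IsResolventOn N₀ W z₀ r R)
    (htaylor : ∀ m ≤ n, (N₀ - z₀ • 1) (a m) + W (B m) = 0)
    (hB : ∀ m ≤ n, B m - (m : ℂ) • a (m - 1) ∈ span ℂ (a '' Iio (m - 1))) (ha0 : a 0 ≠ 0)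
    {v : ℂ} (hv : v ≠ 0) (hvr : ‖v‖ ≤ r) {m : ℕ} (hm : m ≤ n) :
    ((1 - v • (R v * W)) ^ (m + 1)) (a m) = 0 ∧ ((1 - v • (R v * W)) ^ m) (a m) ≠ 0 := by
  set T : H →L[ℂ] H := 1 - v • (R v * W)
  have hrel : ∀ m ≤ n, v • (T : H →ₗ[ℂ] H) (a m) = T (B m) - B m :=
    smul_resolvent_apply_eq hR htaylor hv hvr
  have hnil := pow_succ_apply_eq_zero hv hrel (fun m hm => mem_span_image_Iio_of_sub_mem (hB m hm))
    m hm
  have hord := smul_pow_apply_eq_factorial_smul hv hrel hB m hm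
  simp only [← toLinearMap_pow, coe_coe] at hnil hord
  refine ⟨hnil, fun h => ?_⟩
  rw [h, smul_zero, eq_comm] at hord
  refine smul_ne_zero (mul_ne_zero ?_ ?_) ha0 hord
  · exact pow_ne_zero _ (neg_ne_zero.mpr one_ne_zero)
  · exact Nat.cast_ne_zero.mpr (Nat.factorial_ne_zero _)

variable [CompleteSpace H]

theorem resA_apply_eq (hr : 0 < r) (hR : IsResolventOn N₀ W z₀ r R)
    (htaylor : ∀ m ≤ n, (N₀ - z₀ • 1) (a m) + W (B m) = 0)
    (hB : ∀ m ≤ n, B m ∈ span ℂ (a '' Iio m)) {m : ℕ} (hm : m ≤ n) :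
    resA R W r (a m) = B m := by
  have hsphere : ∀ v ∈ sphere (0 : ℂ) r, v ≠ 0 ∧ ‖v‖ ≤ r := fun v hv =>
    ⟨ne_zero_of_mem_sphere hr.ne' ⟨v, hv⟩, (mem_sphere_zero_iff_norm.mp hv).le⟩
  have hRcont : ContinuousOn R (sphere 0 r) :=
    ContinuousOn.of_mul_eq_one (f := fun v => N₀ + v • W - z₀ • 1) (by fun_prop)
      fun v hv => hR v (hsphere v hv).1 (hsphere v hv).2
  rw [resA_eq_neg_smul_circleIntegral W hr hRcont, smul_apply,
    circleIntegral_apply_eq_neg_smul (T := fun v => 1 - v • (R v * W)) hr (by fun_prop)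
      (fun m hm v hv => smul_resolvent_apply_eq hR htaylor (hsphere v hv).1 (hsphere v hv).2 m hm)
      hB hm,
    smul_smul, neg_mul_neg, inv_mul_cancel₀ two_pi_I_ne_zero, one_smul]

end Resolvent

theorem tangent_resonant_path_gives_high_order_general
    {H : Type*} [NormedAddCommGroup H] [InnerProductSpace ℂ H] [CompleteSpace H]
    (N₀ W : H →L[ℂ] H) (z₀ : ℂ) (r : ℝ) (hr : 0 < r)
    (R : ℂ → (H →L[ℂ] H))
    (hR : ∀ v : ℂ, v ≠ 0 → ‖v‖ ≤ r →
      (N₀ + v • W - z₀ • (1 : H →L[ℂ] H)) * R v = 1 ∧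
      R v * (N₀ + v • W - z₀ • (1 : H →L[ℂ] H)) = 1)
    (k : ℕ) (hk : 2 ≤ k) (c : ℕ → ℂ)
    (ρ : ℝ) (hρ : 0 < ρ)
    -- the resonant path `N(v) = N₀ + vW + Σ_{j=2}^{k-1} c_j v^j W + v^k M(v)`
    (M : ℂ → (H →L[ℂ] H)) (hM : AnalyticOnNhd ℂ M (Metric.ball (0 : ℂ) ρ))
    (Nf : ℂ → (H →L[ℂ] H))
    (hNf : ∀ v ∈ Metric.ball (0 : ℂ) ρ,
      Nf v = N₀ + v • W + (∑ j ∈ Finset.Icc 2 (k - 1), c j * v ^ j) • W + v ^ k • M v)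
    -- the eigenpath `χ` at the constant eigenvalue `z₀`
    (χ : ℂ → H) (hχ : AnalyticOnNhd ℂ χ (Metric.ball (0 : ℂ) ρ))
    (hχne : ∀ v ∈ Metric.ball (0 : ℂ) ρ, χ v ≠ 0)
    (heig : ∀ v ∈ Metric.ball (0 : ℂ) ρ, (Nf v) (χ v) = z₀ • χ v) :
    -- (1) `χ^(l-1)(0)` is a resonance vector of order exactly `l`, `l = 1, …, k`
    (∀ l : ℕ, 1 ≤ l → l ≤ k → ∀ v : ℂ, v ≠ 0 → ‖v‖ ≤ r →
      (((1 : H →L[ℂ] H) - v • (R v * W)) ^ l) (iteratedDeriv (l - 1) χ 0) = 0 ∧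
      (((1 : H →L[ℂ] H) - v • (R v * W)) ^ (l - 1)) (iteratedDeriv (l - 1) χ 0) ≠ 0) ∧
    -- (2) the action of `A` on the derivatives of the eigenpath
    (∀ l : ℕ, 1 ≤ l → l ≤ k →
      resA R W r (iteratedDeriv (l - 1) χ 0) =
        ((l - 1 : ℕ) : ℂ) • iteratedDeriv (l - 2) χ 0 +
        ∑ j ∈ Finset.Icc 2 (l - 1),
          ((Nat.factorial j : ℂ) * ((l - 1).choose j : ℂ) * c j) •
            iteratedDeriv (l - 1 - j) χ 0) ∧
    -- (3) `χ(0)` has depth at least `k - 1`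
    χ 0 ∈ Set.range ⇑(resA R W r ^ (k - 1)) := by
  set a : ℕ → H := fun m => iteratedDeriv m χ 0
  have h0 : (0 : ℂ) ∈ ball (0 : ℂ) ρ := mem_ball_self hρ
  have htaylor : ∀ m ≤ k - 1, (N₀ - z₀ • 1) (a m) + W (tangentTerm c a m) = 0 := by
    intro m hm
    refine map_iteratedDeriv_add_map_tangentTerm_eq_zero (show m < k by omega)
      (hM 0 h0).contDiffAt (hχ 0 h0).contDiffAt
      (eventually_of_mem (ball_mem_nhds 0 hρ) fun v hv => ?_)
    have := heig v hv
    rw [hNf v hv] at this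
    simp only [add_apply, sub_apply, smul_apply, one_apply_eq_self] at this ⊢
    rw [← sub_eq_zero.mpr this]
    abel
  have hB := fun m (_ : m ≤ k - 1) => tangentTerm_sub_mem_span c a m
  have hA : ∀ m ≤ k - 1, resA R W r (a m) = tangentTerm c a m := fun m hm =>
    resA_apply_eq hr hR htaylor (fun m hm => mem_span_image_Iio_of_sub_mem (hB m hm)) hm
  have ha0 : a 0 = χ 0 := congrFun iteratedDeriv_zero 0
  refine ⟨fun l hl hlk v hv hvr => ?_, fun l hl hlk => ?_, ?_⟩
  · simpa only [Nat.sub_add_cancel hl] using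
      resolvent_pow_succ_apply_eq_zero_and_pow_apply_ne_zero hR htaylor hB
        (ha0 ▸ hχne 0 h0) hv hvr (show l - 1 ≤ k - 1 by omega)
  · rw [hA (l - 1) (by omega), tangentTerm, show l - 1 - 1 = l - 2 by omega]
  · have := mem_range_pow_of_sub_mem_span (resA R W r : H →ₗ[ℂ] H) (n := k - 1)
      fun m hm => by rw [coe_coe, hA m hm]; exact hB m hm
    rwa [← toLinearMap_pow, coe_coe, ha0] at this

/-- a resonant path tangent to the direction `W` at `N₀` to order at least
`k` produces resonance vectors of orders `1, …, k` from the derivatives of its eigenpath;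
in particular, `χ(0)` has depth at least `k - 1`. -/
theorem tangent_resonant_path_gives_high_order
    {H : Type*} [NormedAddCommGroup H] [InnerProductSpace ℂ H] [CompleteSpace H]
    (N₀ W : H →L[ℂ] H) (z₀ : ℂ) (r : ℝ) (hr : 0 < r)
    (R : ℂ → (H →L[ℂ] H))
    (hR : ∀ v : ℂ, v ≠ 0 → ‖v‖ ≤ r →
      (N₀ + v • W - z₀ • (1 : H →L[ℂ] H)) * R v = 1 ∧
      R v * (N₀ + v • W - z₀ • (1 : H →L[ℂ] H)) = 1)
    -- `z₀` is a semisimple eigenvalue of `N₀`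
    (hsemisimple : ∀ χ₀ : H, N₀ χ₀ = z₀ • χ₀ → χ₀ ≠ 0 →
      ∃ ψ : H, adjoint N₀ ψ = (starRingEnd ℂ) z₀ • ψ ∧ ⟪ψ, χ₀⟫_ℂ ≠ 0)
    (k : ℕ) (hk : 2 ≤ k) (c : ℕ → ℂ)
    (ρ : ℝ) (hρ : 0 < ρ)
    -- the resonant path `N(v) = N₀ + vW + Σ_{j=2}^{k-1} c_j v^j W + v^k M(v)`
    (M : ℂ → (H →L[ℂ] H)) (hM : AnalyticOnNhd ℂ M (Metric.ball (0 : ℂ) ρ))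
    (Nf : ℂ → (H →L[ℂ] H))
    (hNf : ∀ v ∈ Metric.ball (0 : ℂ) ρ,
      Nf v = N₀ + v • W + (∑ j ∈ Finset.Icc 2 (k - 1), c j * v ^ j) • W + v ^ k • M v)
    -- the eigenpath `χ` at the constant eigenvalue `z₀`
    (χ : ℂ → H) (hχ : AnalyticOnNhd ℂ χ (Metric.ball (0 : ℂ) ρ))
    (hχne : ∀ v ∈ Metric.ball (0 : ℂ) ρ, χ v ≠ 0)
    (heig : ∀ v ∈ Metric.ball (0 : ℂ) ρ, (Nf v) (χ v) = z₀ • χ v) :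
    -- (1) `χ^(l-1)(0)` is a resonance vector of order exactly `l`, `l = 1, …, k`
    (∀ l : ℕ, 1 ≤ l → l ≤ k → ∀ v : ℂ, v ≠ 0 → ‖v‖ ≤ r →
      (((1 : H →L[ℂ] H) - v • (R v * W)) ^ l) (iteratedDeriv (l - 1) χ 0) = 0 ∧
      (((1 : H →L[ℂ] H) - v • (R v * W)) ^ (l - 1)) (iteratedDeriv (l - 1) χ 0) ≠ 0) ∧
    -- (2) the action of `A` on the derivatives of the eigenpath
    (∀ l : ℕ, 1 ≤ l → l ≤ k →
      resA R W r (iteratedDeriv (l - 1) χ 0) =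
        ((l - 1 : ℕ) : ℂ) • iteratedDeriv (l - 2) χ 0 +
        ∑ j ∈ Finset.Icc 2 (l - 1),
          ((Nat.factorial j : ℂ) * ((l - 1).choose j : ℂ) * c j) •
            iteratedDeriv (l - 1 - j) χ 0) ∧
    -- (3) `χ(0)` has depth at least `k - 1`
    χ 0 ∈ Set.range ⇑(resA R W r ^ (k - 1)) :=
  tangent_resonant_path_gives_high_order_general N₀ W z₀ r hr R hR k hk c ρ hρ M hM Nf hNf χ hχ hχne
    heig
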